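/- arXiv:2602.14998 — 2 statements merged into one kernel-verified Lean document; each statement's English description precedes it below -/
import Mathlib

section
/- Let (X, A) have joint distribution P_{X,A}, and conditional on A let X̃ be an independent fresh draw from the conditional distribution P_{X|A}. Let Q_A be a reference probability measure for A such that P_{A|X=x} is absolutely continuous with respect to Q_A for every x, and define the likelihood ratio L(a|x) = dP_{A|X=x}/dQ_A(a). Let X* be an independent copy of X (drawn from the marginal of X, independent of everything else), and define g(x, x*) = E_{A∼Q_A}[L(A|x) L(A|x*)]. Then for any measurable set F of pairs, P((X, X̃) ∈ F) ≤ 2 √( E_{X ⊥ X*}[ g(X, X*) · 1{(X, X*) ∈ F} ] ). -/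
/-!
By Bayes' formula the joint law of `(A, X)` is `Q ⊗ₘ η` with `η a = L(a|·) π`, and the
posterior `ρ a` is `η a` normalised by its mass `h a = η a univ`. Hence
`P((X, X̃) ∈ F) = ∫ (η a ⊗ ρ a) F dQ = ∫ h a · (ρ a ⊗ ρ a) F dQ`, while the integral on the right
is `∫ (η a ⊗ η a) F dQ = ∫ (h a)² · (ρ a ⊗ ρ a) F dQ`. As `(ρ a ⊗ ρ a) F ≤ 1`, the square of the
first integrand is bounded by the second, and Jensen's inequality for the probability measure
`Q` concludes.
-/

open MeasureTheory ProbabilityTheory Set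
open scoped ENNReal

namespace ProbabilityTheory.Kernel

variable {α β γ : Type*} {mα : MeasurableSpace α} {mβ : MeasurableSpace β}
  {mγ : MeasurableSpace γ}

instance isSFiniteKernel_withDensity (κ : Kernel α β) [IsSFiniteKernel κ]
    (f : α → β → ℝ≥0∞) : IsSFiniteKernel (κ.withDensity f) := by
  by_cases hf : Measurable (Function.uncurry f)
  swap
  · rw [withDensity_of_not_measurable _ hf]; infer_instance
  set g : α → β → ℝ≥0∞ := fun a b => if f a b = ∞ then 1 else 0
  have hg : Measurable (Function.uncurry g) :=
    Measurable.ite (hf (measurableSet_singleton ∞)) measurable_const measurable_const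
  have hsum : Summable fun _ : ℕ => g :=
    Pi.summable.2 fun _ => Pi.summable.2 fun _ => ENNReal.summable
  have htsum : Function.uncurry (∑' _ : ℕ, g) = fun p => ∑' _ : ℕ, Function.uncurry g p := by
    ext p
    rw [Function.uncurry_apply_pair, tsum_apply hsum, tsum_apply (Pi.summable.1 hsum _)]
    rfl
  have hsplit : f = (fun a b => ((f a b).toNNReal : ℝ≥0∞)) + ∑' _ : ℕ, g := by
    ext a b
    rw [Pi.add_apply, Pi.add_apply, tsum_apply hsum, tsum_apply (Pi.summable.1 hsum a)]
    by_cases h : f a b = ∞ <;> simp [g, h]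
  have : IsSFiniteKernel (κ.withDensity g) :=
    IsSFiniteKernel.withDensity κ fun a b => by simp only [g]; split_ifs <;> simp
  rw [hsplit, withDensity_add_right (by fun_prop) (htsum ▸ Measurable.tsum fun _ => hg),
    withDensity_tsum _ fun _ => hg]
  infer_instance

theorem measurable_kernel_fst_prodMk_snd (κ : Kernel α β) [IsSFiniteKernel κ]
    {t : Set (γ × β)} (ht : MeasurableSet t) :
    Measurable fun p : α × γ => κ p.1 (Prod.mk p.2 ⁻¹' t) :=
  (κ.comap Prod.fst measurable_fst).measurable_kernel_prodMk_left
    (t := {q : (α × γ) × β | (q.1.2, q.2) ∈ t}) ((measurable_fst.snd.prodMk measurable_snd) ht)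

end ProbabilityTheory.Kernel

namespace MeasureTheory.Measure

variable {α β : Type*} {mα : MeasurableSpace α} {mβ : MeasurableSpace β}

lemma map_fst_compProd (μ : Measure α) [SFinite μ] (η : Kernel α β) [IsSFiniteKernel η] :
    (μ ⊗ₘ η).map Prod.fst = μ.withDensity fun a => η a univ := by
  ext s hs
  rw [map_apply measurable_fst hs, ← prod_univ, compProd_apply_prod hs .univ,
    withDensity_apply _ hs]

lemma map_swap_compProd_withDensity (μ : Measure α) [SFinite μ] (ν : Measure β) [SFinite ν]
    {f : α → β → ℝ≥0∞} (hf : Measurable (Function.uncurry f)) :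
    (μ ⊗ₘ (Kernel.const α ν).withDensity f).map Prod.swap
      = ν ⊗ₘ (Kernel.const β μ).withDensity fun b a => f a b := by
  rw [compProd_withDensity hf,
    compProd_withDensity (f := fun b a => f a b) (hf.comp measurable_swap), compProd_const,
    compProd_const, ← prod_swap (μ := μ) (ν := ν)]
  ext s hs
  rw [map_apply measurable_swap hs, withDensity_apply _ (measurable_swap hs),
    withDensity_apply _ hs, setLIntegral_map hs (by fun_prop) measurable_swap]
  rfl

/-- One test function at a time: identifying `ρ a` with `η a / η a univ` as measures would need
a countably generated σ-algebra on `β`. -/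
lemma ae_mul_lintegral_eq_of_compProd_eq {μ : Measure α} [SigmaFinite μ] {η ρ : Kernel α β}
    [IsSFiniteKernel η] [IsSFiniteKernel ρ] {g : α → ℝ≥0∞} (hg : Measurable g)
    (h : μ ⊗ₘ η = μ.withDensity g ⊗ₘ ρ) {f : α × β → ℝ≥0∞} (hf : Measurable f) :
    ∀ᵐ a ∂μ, g a * ∫⁻ b, f (a, b) ∂ρ a = ∫⁻ b, f (a, b) ∂η a := by
  refine ae_eq_of_forall_setLIntegral_eq_of_sigmaFinite (hg.mul hf.lintegral_kernel_prod_right')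
    hf.lintegral_kernel_prod_right' fun s hs _ => ?_
  calc ∫⁻ a in s, g a * ∫⁻ b, f (a, b) ∂ρ a ∂μ
      = ∫⁻ a in s, ∫⁻ b, f (a, b) ∂ρ a ∂μ.withDensity g :=
        (setLIntegral_withDensity_eq_setLIntegral_mul _ hg hf.lintegral_kernel_prod_right' hs).symm
    _ = ∫⁻ p in s ×ˢ univ, f p ∂(μ.withDensity g ⊗ₘ ρ) := by
        rw [setLIntegral_compProd hf hs .univ]; simp only [restrict_univ]
    _ = ∫⁻ a in s, ∫⁻ b, f (a, b) ∂η a ∂μ := by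
        rw [← h, setLIntegral_compProd hf hs .univ]; simp only [restrict_univ]

lemma ae_sq_prod_apply_le_of_compProd_eq {μ : Measure α} [SigmaFinite μ] {η ρ : Kernel α β}
    [IsSFiniteKernel η] [IsMarkovKernel ρ]
    (h : μ ⊗ₘ η = μ.withDensity (fun a => η a univ) ⊗ₘ ρ)
    {F : Set (β × β)} (hF : MeasurableSet F) :
    ∀ᵐ a ∂μ, ((η a).prod (ρ a) F) ^ 2 ≤ (η a).prod (η a) F := by
  have hmass : Measurable fun a => η a univ := η.measurable_coe .univ
  filter_upwards
    [ae_mul_lintegral_eq_of_compProd_eq hmass h (ρ.measurable_kernel_fst_prodMk_snd hF),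
    ae_mul_lintegral_eq_of_compProd_eq hmass h
      (η.measurable_kernel_fst_prodMk_snd (measurable_swap hF))] with a hρ hη
  rw [← prod_apply (μ := η a) hF, ← prod_apply hF] at hρ
  change η a univ * ∫⁻ y, η a ((fun x => (x, y)) ⁻¹' F) ∂ρ a
    = ∫⁻ y, η a ((fun x => (x, y)) ⁻¹' F) ∂η a at hη
  rw [← prod_apply_symm hF, ← prod_apply_symm hF] at hη
  calc ((η a).prod (ρ a) F) ^ 2
      = (ρ a).prod (ρ a) F * (η a univ * (η a).prod (ρ a) F) := by rw [← hρ]; ring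
    _ = (ρ a).prod (ρ a) F * (η a).prod (η a) F := by rw [hη]
    _ ≤ (η a).prod (η a) F := mul_le_of_le_one_left' prob_le_one

end MeasureTheory.Measure

open MeasureTheory.Measure

lemma MeasureTheory.lintegral_le_rpow_half_of_ae_sq_le {α : Type*} {mα : MeasurableSpace α}
    {μ : Measure α} [IsProbabilityMeasure μ] {f g : α → ℝ≥0∞} (hg : AEMeasurable g μ)
    (h : ∀ᵐ a ∂μ, f a ^ 2 ≤ g a) :
    ∫⁻ a, f a ∂μ ≤ (∫⁻ a, g a ∂μ) ^ (1 / 2 : ℝ) := by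
  have hpq : (2 : ℝ).HolderConjugate 2 :=
    (Real.holderConjugate_iff_eq_conjExponent one_lt_two).2 (by norm_num)
  have hf : ∀ᵐ a ∂μ, f a ≤ g a ^ (1 / 2 : ℝ) := by
    filter_upwards [h] with a ha
    calc f a = (f a ^ 2) ^ ((2 : ℕ)⁻¹ : ℝ) := (ENNReal.pow_rpow_inv_natCast two_ne_zero _).symm
      _ ≤ g a ^ (1 / 2 : ℝ) := by norm_num; gcongr
  have hsq : ∀ a, (g a ^ (1 / 2 : ℝ)) ^ (2 : ℝ) = g a := fun a => by
    rw [← ENNReal.rpow_mul]; norm_num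
  calc ∫⁻ a, f a ∂μ ≤ ∫⁻ a, g a ^ (1 / 2 : ℝ) * 1 ∂μ := by simpa using lintegral_mono_ae hf
    _ ≤ (∫⁻ a, (g a ^ (1 / 2 : ℝ)) ^ (2 : ℝ) ∂μ) ^ (1 / 2 : ℝ)
          * (∫⁻ _, 1 ^ (2 : ℝ) ∂μ) ^ (1 / 2 : ℝ) :=
        ENNReal.lintegral_mul_le_Lp_mul_Lq μ hpq (hg.pow_const _) aemeasurable_const
    _ = (∫⁻ a, g a ∂μ) ^ (1 / 2 : ℝ) := by
        simp only [hsq, ENNReal.one_rpow, lintegral_const, measure_univ, mul_one]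

theorem stmt_5_general {𝒳 𝒜 : Type*} [MeasurableSpace 𝒳] [MeasurableSpace 𝒜]
    (π : Measure 𝒳) [IsProbabilityMeasure π]
    (κ : Kernel 𝒳 𝒜)
    (Q : Measure 𝒜) [IsProbabilityMeasure Q]
    (L : 𝒜 → 𝒳 → ENNReal) (hL : Measurable (Function.uncurry L))
    (hdens : ∀ x, κ x = Q.withDensity fun a => L a x)
    (ρ : Kernel 𝒜 𝒳) [IsMarkovKernel ρ]
    (hpost : (π.compProd κ).map Prod.swap
        = ((π.compProd κ).map Prod.snd).compProd ρ)
    (F : Set (𝒳 × 𝒳)) (hF : MeasurableSet F) :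
    ∫⁻ q : 𝒳 × 𝒜, ρ q.2 {y | (q.1, y) ∈ F} ∂(π.compProd κ)
      ≤ 2 * (∫⁻ q in F, ∫⁻ a, L a q.1 * L a q.2 ∂Q ∂(π.prod π)) ^ (1 / 2 : ℝ) := by
  set η : Kernel 𝒜 𝒳 := (Kernel.const 𝒜 π).withDensity L
  have hκ : κ = (Kernel.const 𝒳 Q).withDensity fun x a => L a x := by
    ext1 x
    rw [hdens, Kernel.withDensity_apply (f := fun x a => L a x) _ (hL.comp measurable_swap),
      Kernel.const_apply]
  have hbayes : (π ⊗ₘ κ).map Prod.swap = Q ⊗ₘ η := by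
    rw [hκ]
    exact map_swap_compProd_withDensity π Q (f := fun x a => L a x) (hL.comp measurable_swap)
  have hjoint : Q ⊗ₘ η = Q.withDensity (fun a => η a univ) ⊗ₘ ρ := by
    rw [← map_fst_compProd, ← hbayes, Measure.map_map measurable_fst measurable_swap]
    exact hpost
  have hlhs : ∫⁻ q : 𝒳 × 𝒜, ρ q.2 {y | (q.1, y) ∈ F} ∂(π ⊗ₘ κ)
      = ∫⁻ a, (η a).prod (ρ a) F ∂Q := by
    have hu := ρ.measurable_kernel_fst_prodMk_snd hF
    change ∫⁻ q, (fun p : 𝒜 × 𝒳 => ρ p.1 (Prod.mk p.2 ⁻¹' F)) q.swap ∂(π ⊗ₘ κ) = _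
    rw [← lintegral_map hu measurable_swap, hbayes, lintegral_compProd hu]
    simp_rw [prod_apply hF]
  have hrhs : ∫⁻ q in F, ∫⁻ a, L a q.1 * L a q.2 ∂Q ∂(π.prod π)
      = ∫⁻ a, (η a).prod (η a) F ∂Q := by
    rw [lintegral_lintegral_swap (by fun_prop)]
    refine lintegral_congr fun a => ?_
    rw [Kernel.withDensity_apply _ hL, Kernel.const_apply,
      prod_withDensity hL.of_uncurry_left hL.of_uncurry_left, withDensity_apply _ hF]
  have hmeas : AEMeasurable (fun a => (η a).prod (η a) F) Q := by
    simpa only [Kernel.prod_apply] using ((η ×ₖ η).measurable_coe hF).aemeasurable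
  rw [hlhs, hrhs]
  calc ∫⁻ a, (η a).prod (ρ a) F ∂Q
      ≤ (∫⁻ a, (η a).prod (η a) F ∂Q) ^ (1 / 2 : ℝ) :=
        lintegral_le_rpow_half_of_ae_sq_le hmeas (ae_sq_prod_apply_le_of_compProd_eq hjoint hF)
    _ ≤ _ := le_mul_of_one_le_left' one_le_two

/-- Change of measure: `(X,A)` has joint law `π ⊗ κ` where `π` is the prior on `X` and
`κ = P_{A|X}`; each `κ x` has density `L(·|x)` with respect to the reference measure
`Q`; `ρ = P_{X|A}` is the posterior kernel, i.e. a disintegration of the joint law given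
`A`; and `X̃` is a fresh draw from the posterior given `A`. Then for any measurable set
`F` of pairs, `P((X, X̃) ∈ F) ≤ 2 √(E_{X ⟂ X*}[g(X,X*) 1{(X,X*) ∈ F}])`, where
`g(x,x*) = E_{A ∼ Q}[L(A|x) L(A|x*)]` and `X*` is an independent copy of `X`. -/
theorem stmt_5 {𝒳 𝒜 : Type*} [MeasurableSpace 𝒳] [MeasurableSpace 𝒜]
    (π : Measure 𝒳) [IsProbabilityMeasure π]
    (κ : Kernel 𝒳 𝒜) [IsMarkovKernel κ]
    (Q : Measure 𝒜) [IsProbabilityMeasure Q]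
    (L : 𝒜 → 𝒳 → ENNReal) (hL : Measurable (Function.uncurry L))
    (hdens : ∀ x, κ x = Q.withDensity fun a => L a x)
    (ρ : Kernel 𝒜 𝒳) [IsMarkovKernel ρ]
    (hpost : (π.compProd κ).map Prod.swap
        = ((π.compProd κ).map Prod.snd).compProd ρ)
    (F : Set (𝒳 × 𝒳)) (hF : MeasurableSet F) :
    ∫⁻ q : 𝒳 × 𝒜, ρ q.2 {y | (q.1, y) ∈ F} ∂(π.compProd κ)
      ≤ 2 * (∫⁻ q in F, ∫⁻ a, L a q.1 * L a q.2 ∂Q ∂(π.prod π)) ^ (1 / 2 : ℝ) :=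
  stmt_5_general π κ Q L hL hdens ρ hpost F hF
end

section
/- Fix nonnegative integers ℓ_1, …, ℓ_k with even sum. Then Σ over all families (ℓ_{ij})_{1≤i<j≤k} of nonnegative integers satisfying ℓ_i = Σ_{j≠i} ℓ_{ij} for every i, of the quantity (∏_{i=1}^k ℓ_i!) / (∏_{i<j} ℓ_{ij}!), is at most (Σ_{i=1}^k ℓ_i − 1)!!. -/
/-!
Write `w(ℓ, L) = ∏ ℓ_i! / ∏_{i<j} L_ij!` (`pairWeight`) and `S(ℓ) = Σ_L w(ℓ, L)`
(`pairWeightSum`). Fix a colour `i` with `ℓ_i ≠ 0`. As `ℓ_i = Σ_j L_ij`, we get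
`ℓ_i S(ℓ) = Σ_{j ≠ i} Σ_L L_ij w(ℓ, L)`. Removing one pair `{i, j}` from `L` gives
`L_ij w(ℓ, L) = ℓ_i ℓ_j w(ℓ - e_i - e_j, L - E_ij)` with `E_ij = symmSingle i j`, and
`L ↦ L - E_ij` is a bijection from the families with `L_ij ≠ 0` onto those for `ℓ - e_i - e_j`.
So `S(ℓ) = Σ_{j ≠ i} ℓ_j S(ℓ - e_i - e_j)` (pair the first point of colour `i` with one of the
`ℓ_j` points of colour `j`), and by induction on `n = Σ ℓ` this is at most
`(n - ℓ_i) (n - 3)‼ ≤ (n - 1)‼`.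
-/

open Finset Nat

section Factorial

theorem Nat.sub_one_mul_doubleFactorial_sub_three_le (n : ℕ) : (n - 1) * (n - 3)‼ ≤ (n - 1)‼ := by
  rcases n with _ | _ | _ | n <;> simp

variable {ι : Type*} [DecidableEq ι]

theorem Finset.prod_factorial_eq_mul_prod_factorial_tsub_single {s : Finset ι} {f : ι → ℕ} {i : ι}
    (hi : i ∈ s) (hfi : f i ≠ 0) :
    ∏ a ∈ s, (f a)! = f i * ∏ a ∈ s, ((f - Pi.single i 1 : ι → ℕ) a)! := by
  have hrest : ∏ a ∈ s.erase i, ((f - Pi.single i 1 : ι → ℕ) a)! = ∏ a ∈ s.erase i, (f a)! :=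
    prod_congr rfl fun a ha => by simp [ne_of_mem_erase ha]
  rw [← mul_prod_erase s _ hi, ← mul_prod_erase s _ hi, hrest, ← mul_assoc]
  simp [Nat.mul_factorial_pred hfi]

theorem Fintype.sum_tsub_single_one [Fintype ι] {f : ι → ℕ} {i : ι} (hfi : f i ≠ 0) :
    ∑ a, (f - Pi.single i 1 : ι → ℕ) a = ∑ a, f a - 1 := by
  simp only [Pi.sub_apply]
  rw [sum_tsub_distrib _ fun a _ => ?_, Fintype.sum_pi_single']
  rcases eq_or_ne a i with rfl | h
  · simpa using Nat.one_le_iff_ne_zero.mpr hfi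
  · simp [h]

end Factorial

section SymmSingle

variable {ι : Type*} [DecidableEq ι]

def symmSingle (i j : ι) : ι → ι → ℕ :=
  fun a b => (if a = i ∧ b = j then 1 else 0) + if a = j ∧ b = i then 1 else 0

theorem symmSingle_comm (i j : ι) : symmSingle i j = symmSingle j i := by
  funext a b
  exact add_comm _ _

theorem symmSingle_apply_comm (i j a b : ι) : symmSingle i j a b = symmSingle i j b a := by
  simp only [symmSingle]
  rw [add_comm]
  congr 1 <;> exact if_congr (by tauto) rfl rfl

theorem symmSingle_apply_self {i j : ι} (hij : i ≠ j) (a : ι) : symmSingle i j a a = 0 := by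
  simp only [symmSingle]
  rw [if_neg, if_neg] <;> rintro ⟨rfl, rfl⟩ <;> exact hij rfl

theorem sum_symmSingle [Fintype ι] (i j a : ι) :
    ∑ b, symmSingle i j a b = (Pi.single i 1 + Pi.single j 1 : ι → ℕ) a := by
  simp [symmSingle, sum_add_distrib, Pi.single_apply, ite_and]

theorem symmSingle_le {L : ι → ι → ℕ} (hL : ∀ a b, L a b = L b a) {i j : ι} (hij : i ≠ j)
    (h : L i j ≠ 0) : symmSingle i j ≤ L := by
  intro a b
  simp only [symmSingle]
  split_ifs with h1 h2 h2
  · exact absurd (h1.1.symm.trans h2.1) hij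
  · obtain ⟨rfl, rfl⟩ := h1; omega
  · obtain ⟨rfl, rfl⟩ := h2; rw [hL]; omega
  · simp

end SymmSingle

section PairMultiplicity

variable {ι : Type*} [Fintype ι]

def IsPairMultiplicity (ℓ : ι → ℕ) (L : ι → ι → ℕ) : Prop :=
  (∀ i j, L i j = L j i) ∧ (∀ i, L i i = 0) ∧ ∀ i, ℓ i = ∑ j, L i j

instance IsPairMultiplicity.decidablePred (ℓ : ι → ℕ) : DecidablePred (IsPairMultiplicity ℓ) :=
  fun _ => inferInstanceAs (Decidable (_ ∧ _ ∧ _))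

def pairMultiplicities [DecidableEq ι] (ℓ : ι → ℕ) : Finset (ι → ι → ℕ) :=
  (Iic fun _ _ => ∑ i, ℓ i).filter (IsPairMultiplicity ℓ)

variable {ℓ : ι → ℕ} {L : ι → ι → ℕ}

theorem IsPairMultiplicity.le (h : IsPairMultiplicity ℓ L) (a b : ι) : L a b ≤ ℓ a :=
  h.2.2 a ▸ single_le_sum (fun _ _ => Nat.zero_le _) (mem_univ b)

theorem IsPairMultiplicity.le_right (h : IsPairMultiplicity ℓ L) (a b : ι) : L a b ≤ ℓ b :=
  h.1 a b ▸ h.le b a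

variable [DecidableEq ι]

theorem mem_pairMultiplicities : L ∈ pairMultiplicities ℓ ↔ IsPairMultiplicity ℓ L := by
  refine mem_filter.trans ⟨And.right, fun h => ⟨mem_Iic.mpr fun a b => ?_, h⟩⟩
  exact (h.le a b).trans (single_le_sum (fun _ _ => Nat.zero_le _) (mem_univ a))

theorem IsPairMultiplicity.tsub_symmSingle (h : IsPairMultiplicity ℓ L) {i j : ι} (hij : i ≠ j)
    (hL : L i j ≠ 0) :
    IsPairMultiplicity (ℓ - Pi.single i 1 - Pi.single j 1) (L - symmSingle i j) := by
  refine ⟨fun a b => ?_, fun a => ?_, fun a => ?_⟩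
  · simp only [Pi.sub_apply, h.1 a b, symmSingle_apply_comm i j a b]
  · simp [h.2.1 a]
  · have hle := symmSingle_le h.1 hij hL
    simp only [Pi.sub_apply]
    rw [sum_tsub_distrib _ fun b _ => hle a b, sum_symmSingle, h.2.2 a, tsub_tsub, Pi.add_apply]

theorem IsPairMultiplicity.add_symmSingle {i j : ι}
    (h : IsPairMultiplicity (ℓ - Pi.single i 1 - Pi.single j 1) L) (hij : i ≠ j)
    (hi : ℓ i ≠ 0) (hj : ℓ j ≠ 0) : IsPairMultiplicity ℓ (L + symmSingle i j) := by
  refine ⟨fun a b => ?_, fun a => ?_, fun a => ?_⟩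
  · simp only [Pi.add_apply, h.1 a b, symmSingle_apply_comm i j a b]
  · simp [h.2.1 a, symmSingle_apply_self hij]
  · simp only [Pi.add_apply, sum_add_distrib, sum_symmSingle, ← h.2.2 a]
    rcases eq_or_ne a i with rfl | hai <;> rcases eq_or_ne a j with rfl | haj <;>
      simp_all <;> omega

end PairMultiplicity

section PairWeight

variable {ι : Type*} [Fintype ι] [LinearOrder ι]

def pairWeight (ℓ : ι → ℕ) (L : ι → ι → ℕ) : ℚ :=
  (∏ i, ((ℓ i)! : ℚ)) / ∏ p ∈ univ.filter (fun p : ι × ι => p.1 < p.2), ((L p.1 p.2)! : ℚ)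

def pairWeightSum (ℓ : ι → ℕ) : ℚ :=
  ∑ L ∈ pairMultiplicities ℓ, pairWeight ℓ L

variable {ℓ : ι → ℕ} {L : ι → ι → ℕ}

theorem IsPairMultiplicity.mul_pairWeight_of_lt (h : IsPairMultiplicity ℓ L) {i j : ι}
    (hij : i < j) (hL : L i j ≠ 0) :
    (L i j : ℚ) * pairWeight ℓ L
      = ℓ i * ℓ j * pairWeight (ℓ - Pi.single i 1 - Pi.single j 1) (L - symmSingle i j) := by
  have hi : ℓ i ≠ 0 := fun h0 => hL (Nat.eq_zero_of_le_zero (h0 ▸ h.le i j))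
  have hj : ℓ j ≠ 0 := fun h0 => hL (Nat.eq_zero_of_le_zero (h0 ▸ h.le_right i j))
  have hnum : ∏ a, (ℓ a)! = ℓ i * ℓ j * ∏ a, ((ℓ - Pi.single i 1 - Pi.single j 1 : ι → ℕ) a)! := by
    have hj' : (ℓ - Pi.single i 1 : ι → ℕ) j = ℓ j := by simp [hij.ne']
    rw [prod_factorial_eq_mul_prod_factorial_tsub_single (mem_univ i) hi,
      prod_factorial_eq_mul_prod_factorial_tsub_single (mem_univ j) (hj'.trans_ne hj), hj',
      mul_assoc]
  have hden : ∏ p ∈ univ.filter (fun p : ι × ι => p.1 < p.2), (L p.1 p.2)!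
      = L i j * ∏ p ∈ univ.filter (fun p : ι × ι => p.1 < p.2),
          ((L - symmSingle i j) p.1 p.2)! := by
    rw [prod_factorial_eq_mul_prod_factorial_tsub_single (f := fun p : ι × ι => L p.1 p.2)
      (i := (i, j)) (by simpa using hij) hL]
    congr 1
    refine prod_congr rfl fun p hp => ?_
    have hp : p.1 < p.2 := (mem_filter.mp hp).2
    simp only [Pi.sub_apply, symmSingle, Pi.single_apply, Prod.ext_iff]
    have hji : ¬(p.1 = j ∧ p.2 = i) := by
      rintro ⟨h1, h2⟩
      rw [h1, h2] at hp
      exact hij.asymm hp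
    rw [if_neg hji, add_zero]
  have hden0 : ∏ p ∈ univ.filter (fun p : ι × ι => p.1 < p.2),
      (((L - symmSingle i j) p.1 p.2)! : ℚ) ≠ 0 :=
    prod_ne_zero_iff.mpr fun _ _ => by positivity
  have hL0 : (L i j : ℚ) ≠ 0 := by exact_mod_cast hL
  simp only [pairWeight]
  rw [← Nat.cast_prod, hnum, ← Nat.cast_prod, hden]
  push_cast
  field_simp

theorem IsPairMultiplicity.mul_pairWeight (h : IsPairMultiplicity ℓ L) {i j : ι} (hij : i ≠ j)
    (hL : L i j ≠ 0) :
    (L i j : ℚ) * pairWeight ℓ L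
      = ℓ i * ℓ j * pairWeight (ℓ - Pi.single i 1 - Pi.single j 1) (L - symmSingle i j) := by
  rcases hij.lt_or_gt with hlt | hgt
  · exact h.mul_pairWeight_of_lt hlt hL
  · rw [h.1 i j, symmSingle_comm, tsub_right_comm, mul_comm (ℓ i : ℚ)]
    exact h.mul_pairWeight_of_lt hgt (h.1 i j ▸ hL)

theorem sum_mul_pairWeight {i j : ι} (hij : i ≠ j) :
    ∑ L ∈ pairMultiplicities ℓ, (L i j : ℚ) * pairWeight ℓ L
      = ℓ i * ℓ j * pairWeightSum (ℓ - Pi.single i 1 - Pi.single j 1) := by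
  by_cases hij0 : ℓ i = 0 ∨ ℓ j = 0
  · have hvanish : ∀ L ∈ pairMultiplicities ℓ, L i j = 0 := fun L hL => by
      have h := mem_pairMultiplicities.mp hL
      rcases hij0 with h0 | h0
      · exact Nat.eq_zero_of_le_zero (h0 ▸ h.le i j)
      · exact Nat.eq_zero_of_le_zero (h0 ▸ h.le_right i j)
    rw [sum_eq_zero fun L hL => by simp [hvanish L hL]]
    rcases hij0 with h0 | h0 <;> simp [h0]
  obtain ⟨hi, hj⟩ := not_or.mp hij0
  rw [pairWeightSum, mul_sum, ← sum_filter_of_ne (p := fun L => L i j ≠ 0)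
    fun L _ hne h0 => hne (by simp [h0])]
  refine sum_nbij' (· - symmSingle i j) (· + symmSingle i j) (fun L hL => ?_) (fun L hL => ?_)
    (fun L hL => ?_) (fun L _ => add_tsub_cancel_right L _) (fun L hL => ?_)
  · obtain ⟨hL, hne⟩ := mem_filter.mp hL
    exact mem_pairMultiplicities.mpr ((mem_pairMultiplicities.mp hL).tsub_symmSingle hij hne)
  · refine mem_filter.mpr ⟨mem_pairMultiplicities.mpr ?_, by simp [symmSingle]⟩
    exact (mem_pairMultiplicities.mp hL).add_symmSingle hij hi hj
  · obtain ⟨hL, hne⟩ := mem_filter.mp hL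
    exact tsub_add_cancel_of_le (symmSingle_le (mem_pairMultiplicities.mp hL).1 hij hne)
  · obtain ⟨hL, hne⟩ := mem_filter.mp hL
    exact (mem_pairMultiplicities.mp hL).mul_pairWeight hij hne

theorem pairWeightSum_eq_sum_erase {i : ι} (hi : ℓ i ≠ 0) :
    pairWeightSum ℓ
      = ∑ j ∈ univ.erase i, ℓ j * pairWeightSum (ℓ - Pi.single i 1 - Pi.single j 1) := by
  refine mul_left_cancel₀ (Nat.cast_ne_zero.mpr hi : (ℓ i : ℚ) ≠ 0) ?_
  calc (ℓ i : ℚ) * pairWeightSum ℓ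
        = ∑ j, ∑ L ∈ pairMultiplicities ℓ, (L i j : ℚ) * pairWeight ℓ L := by
          rw [pairWeightSum, mul_sum, sum_comm]
          refine sum_congr rfl fun L hL => ?_
          rw [← sum_mul, (mem_pairMultiplicities.mp hL).2.2 i, Nat.cast_sum]
    _ = ∑ j ∈ univ.erase i, ℓ i * (ℓ j * pairWeightSum (ℓ - Pi.single i 1 - Pi.single j 1)) := by
          rw [← add_sum_erase _ _ (mem_univ i),
            sum_eq_zero fun L hL => by simp [(mem_pairMultiplicities.mp hL).2.1 i], zero_add]
          exact sum_congr rfl fun j hj =>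
            (sum_mul_pairWeight (ne_of_mem_erase hj).symm).trans (mul_assoc _ _ _)
    _ = _ := (mul_sum ..).symm

theorem pairWeightSum_zero : pairWeightSum (0 : ι → ℕ) = 1 := by
  have h : pairMultiplicities (0 : ι → ℕ) = {0} := by
    ext L
    rw [mem_pairMultiplicities, mem_singleton]
    refine ⟨fun h => funext₂ fun a b => Nat.eq_zero_of_le_zero (h.le a b), ?_⟩
    rintro rfl
    exact ⟨fun _ _ => rfl, fun _ => rfl, fun _ => by simp⟩
  simp [pairWeightSum, h, pairWeight]

theorem pairWeightSum_le_doubleFactorial (ℓ : ι → ℕ) :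
    pairWeightSum ℓ ≤ ((∑ i, ℓ i) - 1)‼ := by
  induction hn : ∑ i, ℓ i using Nat.strong_induction_on generalizing ℓ with
  | _ n ih =>
  by_cases hzero : ℓ = 0
  · subst hzero
    rw [← hn]
    simp [pairWeightSum_zero]
  obtain ⟨i, hi⟩ : ∃ i, ℓ i ≠ 0 := by simpa [funext_iff] using hzero
  have hn0 : n ≠ 0 := hn ▸ (sum_pos_iff.mpr ⟨i, mem_univ i, Nat.pos_of_ne_zero hi⟩).ne'
  have hterm : ∀ j ∈ univ.erase i, (ℓ j : ℚ) * pairWeightSum (ℓ - Pi.single i 1 - Pi.single j 1)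
      ≤ ((ℓ j * (n - 3)‼ : ℕ) : ℚ) := by
    intro j hj
    rcases eq_or_ne (ℓ j) 0 with hj0 | hj0
    · simp [hj0]
    have hj' : (ℓ - Pi.single i 1 : ι → ℕ) j = ℓ j := by simp [ne_of_mem_erase hj]
    have hsum : ∑ a, (ℓ - Pi.single i 1 - Pi.single j 1 : ι → ℕ) a = n - 2 := by
      rw [Fintype.sum_tsub_single_one (hj'.trans_ne hj0), Fintype.sum_tsub_single_one hi, hn]
      omega
    have := ih (n - 2) (by omega) _ hsum
    rw [Nat.sub_sub] at this
    push_cast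
    gcongr
  calc pairWeightSum ℓ ≤ ∑ j ∈ univ.erase i, ((ℓ j * (n - 3)‼ : ℕ) : ℚ) := by
        rw [pairWeightSum_eq_sum_erase hi]
        exact sum_le_sum hterm
    _ ≤ (n - 1)‼ := by
        rw [← Nat.cast_sum, Nat.cast_le, ← sum_mul]
        refine le_trans (Nat.mul_le_mul_right _ ?_) (Nat.sub_one_mul_doubleFactorial_sub_three_le n)
        have := add_sum_erase univ ℓ (mem_univ i)
        omega

end PairWeight

theorem stmt_7_general (k : ℕ) (ℓ : Fin k → ℕ) :
    ∑ L ∈ (Finset.Iic (fun _ _ => ∑ i, ℓ i : Fin k → Fin k → ℕ)).filter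
        (fun L => (∀ i j, L i j = L j i) ∧ (∀ i, L i i = 0) ∧ ∀ i, ℓ i = ∑ j, L i j),
        (∏ i, (Nat.factorial (ℓ i) : ℚ))
          / ∏ p ∈ Finset.univ.filter (fun p : Fin k × Fin k => p.1 < p.2),
              (Nat.factorial (L p.1 p.2) : ℚ)
      ≤ (Nat.doubleFactorial ((∑ i, ℓ i) - 1) : ℚ) := by
  -- `Fin k` has its own instances deciding `∀`, so the filter is not syntactically ours.
  convert pairWeightSum_le_doubleFactorial ℓ using 2
  unfold pairWeightSum pairMultiplicities pairWeight IsPairMultiplicity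
  congr

/-- For nonnegative integers `ℓ_1, …, ℓ_k` with even sum, the sum over all symmetric
families `(L_{ij})_{i≠j}` of nonnegative integers (with zero diagonal) satisfying
`ℓ_i = Σ_{j≠i} L_{ij}` for every `i` of `(∏_i ℓ_i!)/(∏_{i<j} L_{ij}!)` is at most
`(Σ_i ℓ_i − 1)!!`. (Every such family satisfies `L i j ≤ Σ_i ℓ_i` entrywise, so the
sum may be taken over the finite set `Iic` of such bounded families.) -/
theorem stmt_7 (k : ℕ) (ℓ : Fin k → ℕ) (heven : Even (∑ i, ℓ i)) :
    ∑ L ∈ (Finset.Iic (fun _ _ => ∑ i, ℓ i : Fin k → Fin k → ℕ)).filter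
        (fun L => (∀ i j, L i j = L j i) ∧ (∀ i, L i i = 0) ∧ ∀ i, ℓ i = ∑ j, L i j),
        (∏ i, (Nat.factorial (ℓ i) : ℚ))
          / ∏ p ∈ Finset.univ.filter (fun p : Fin k × Fin k => p.1 < p.2),
              (Nat.factorial (L p.1 p.2) : ℚ)
      ≤ (Nat.doubleFactorial ((∑ i, ℓ i) - 1) : ℚ) :=
  stmt_7_general k ℓ
end
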